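/- Let f : ℝⁿ → ℝ be β-smooth, bounded below, and suppose additionally that f has a unique stationary point x* and that all sublevel sets of f are compact. Then gradient descent x^{(k+1)} = x^{(k)} - λ∇f(x^{(k)}) with 0 < λ < 2/β converges: x^{(k)} → x*. -/

import Mathlib

open InnerProductSpace Filter

local notation "⟪" x ", " y "⟫" => @inner ℝ _ _ x y

section aux

variable {n : ℕ}

private lemma line_hasDerivAt {f : EuclideanSpace ℝ (Fin n) → ℝ} (hf : ContDiff ℝ 1 f)
    (a v : EuclideanSpace ℝ (Fin n)) (t : ℝ) :
    HasDerivAt (fun t : ℝ => f (a + t • v)) ⟪gradient f (a + t • v), v⟫ t := by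
  have hL : HasDerivAt (fun t : ℝ => a + t • v) v t := by
    simpa using ((hasDerivAt_id t).smul_const v).const_add a
  have hd : DifferentiableAt ℝ f (a + t • v) :=
    (hf.differentiable one_ne_zero).differentiableAt
  have hF : HasFDerivAt f (toDual ℝ _ (gradient f (a + t • v))) (a + t • v) :=
    hasGradientAt_iff_hasFDerivAt.mp hd.hasGradientAt
  simpa [InnerProductSpace.toDual_apply_apply, Function.comp_def] using hF.comp_hasDerivAt t hL

/-- Descent (Taylor) bound for β-Lipschitz gradient. -/
private lemma taylor_bound {f : EuclideanSpace ℝ (Fin n) → ℝ} {β : ℝ} (hβ : 0 < β)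
    (hf : ContDiff ℝ 1 f)
    (hlip : ∀ x y, ‖gradient f x - gradient f y‖ ≤ β * ‖x - y‖)
    (a v : EuclideanSpace ℝ (Fin n)) :
    f (a + v) ≤ f a + ⟪gradient f a, v⟫ + β / 2 * ‖v‖ ^ 2 := by
  set c : ℝ := ⟪gradient f a, v⟫ with hc
  set q : ℝ := ‖v‖ ^ 2 with hq
  set ψ : ℝ → ℝ := fun t => f (a + t • v) - t * c - β / 2 * (t ^ 2 * q) with hψ
  have hder : ∀ t : ℝ, HasDerivAt ψ (⟪gradient f (a + t • v), v⟫ - c - β / 2 * (2 * t * q)) t := by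
    intro t
    have h1 := line_hasDerivAt hf a v t
    have h2 : HasDerivAt (fun t : ℝ => t * c) c t := by simpa using (hasDerivAt_id t).mul_const c
    have h3 : HasDerivAt (fun t : ℝ => β / 2 * (t ^ 2 * q)) (β / 2 * (2 * t * q)) t := by
      have : HasDerivAt (fun t : ℝ => t ^ 2 * q) (2 * t * q) t := by
        simpa using (hasDerivAt_pow 2 t).mul_const q
      simpa using this.const_mul (β / 2)
    exact (h1.sub h2).sub h3
  have hmono : AntitoneOn ψ (Set.Icc (0 : ℝ) 1) := by
    apply antitoneOn_of_deriv_nonpos (convex_Icc 0 1)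
    · exact fun t _ => ((hder t).continuousAt).continuousWithinAt
    · exact fun t _ => ((hder t).differentiableAt).differentiableWithinAt
    · intro t ht
      rw [interior_Icc] at ht
      rw [(hder t).deriv]
      have ht0 : (0 : ℝ) ≤ t := le_of_lt ht.1
      have key : ⟪gradient f (a + t • v), v⟫ - c ≤ β * t * q := by
        have h1 : ⟪gradient f (a + t • v), v⟫ - c = ⟪gradient f (a + t • v) - gradient f a, v⟫ := by
          rw [hc, inner_sub_left]
        rw [h1]
        calc ⟪gradient f (a + t • v) - gradient f a, v⟫
            ≤ ‖gradient f (a + t • v) - gradient f a‖ * ‖v‖ := real_inner_le_norm _ _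
          _ ≤ β * ‖(a + t • v) - a‖ * ‖v‖ := by
              have := hlip (a + t • v) a
              exact mul_le_mul_of_nonneg_right this (norm_nonneg v)
          _ = β * t * q := by
              rw [add_sub_cancel_left, norm_smul, Real.norm_eq_abs, abs_of_nonneg ht0, hq]
              ring
      nlinarith [key]
  have h01 : ψ 1 ≤ ψ 0 := hmono (by norm_num) (by norm_num) (by norm_num)
  have hψ0 : ψ 0 = f a := by simp [hψ]
  have hψ1 : ψ 1 = f (a + v) - c - β / 2 * q := by simp [hψ]
  rw [hψ0, hψ1] at h01
  linarith

end aux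

/-- Gradient descent with step 0 < λ < 2/β on a β-smooth function bounded below, with a
unique stationary point x* and compact sublevel sets, converges: x^{(k)} → x*. -/
theorem gd_converges_unique_stationary {n : ℕ} (f : EuclideanSpace ℝ (Fin n) → ℝ)
    (β lam : ℝ) (hβ : 0 < β)
    (hf : ContDiff ℝ 1 f)
    (hlip : ∀ x y, ‖gradient f x - gradient f y‖ ≤ β * ‖x - y‖)
    (hbdd : BddBelow (Set.range f))
    (xstar : EuclideanSpace ℝ (Fin n))
    (hstat : gradient f xstar = 0)
    (huniq : ∀ y, gradient f y = 0 → y = xstar)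
    (hcompact : ∀ c : ℝ, IsCompact {y | f y ≤ c})
    (x : ℕ → EuclideanSpace ℝ (Fin n))
    (hlam0 : 0 < lam) (hlam : lam < 2 / β)
    (hx : ∀ k, x (k + 1) = x k - lam • gradient f (x k)) :
    Filter.Tendsto x Filter.atTop (nhds xstar) := by
  -- the per-step decrease constant
  set c : ℝ := lam * (1 - β * lam / 2) with hcdef
  have hβlam : β * lam < 2 := by
    have := (lt_div_iff₀ hβ).mp hlam
    linarith [this]
  have hcpos : 0 < c := by
    apply mul_pos hlam0; linarith
  -- descent step
  have hstep : ∀ k, f (x (k + 1)) ≤ f (x k) - c * ‖gradient f (x k)‖ ^ 2 := by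
    intro k
    have h := taylor_bound hβ hf hlip (x k) (-(lam • gradient f (x k)))
    have hx1 : x (k + 1) = x k + -(lam • gradient f (x k)) := by
      rw [hx k]; abel
    rw [← hx1] at h
    have hinner : ⟪gradient f (x k), -(lam • gradient f (x k))⟫ =
        -(lam * ‖gradient f (x k)‖ ^ 2) := by
      rw [inner_neg_right, real_inner_smul_right, real_inner_self_eq_norm_sq]
    have hnorm : ‖-(lam • gradient f (x k))‖ ^ 2 = lam ^ 2 * ‖gradient f (x k)‖ ^ 2 := by
      rw [norm_neg, norm_smul, Real.norm_eq_abs, abs_of_nonneg hlam0.le, mul_pow]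
    rw [hinner, hnorm] at h
    calc f (x (k + 1)) ≤ f (x k) + -(lam * ‖gradient f (x k)‖ ^ 2)
          + β / 2 * (lam ^ 2 * ‖gradient f (x k)‖ ^ 2) := h
      _ = f (x k) - c * ‖gradient f (x k)‖ ^ 2 := by rw [hcdef]; ring
  -- f (x k) is antitone
  have hanti : ∀ k, f (x (k + 1)) ≤ f (x k) := fun k =>
    le_trans (hstep k) (by nlinarith [sq_nonneg ‖gradient f (x k)‖])
  have hantimono : Antitone (fun k => f (x k)) := antitone_nat_of_succ_le hanti
  -- bounded below
  obtain ⟨B, hB⟩ := hbdd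
  have hBle : ∀ k, B ≤ f (x k) := fun k => hB (Set.mem_range_self (x k))
  -- f (x k) converges
  have hfconv : ∃ L, Tendsto (fun k => f (x k)) atTop (nhds L) := by
    refine ⟨⨅ k, f (x k), tendsto_atTop_ciInf hantimono ⟨B, ?_⟩⟩
    rintro r ⟨k, rfl⟩
    exact hBle k
  obtain ⟨L, hL⟩ := hfconv
  -- gradient norms squared → 0
  have hgrad2 : Tendsto (fun k => ‖gradient f (x k)‖ ^ 2) atTop (nhds 0) := by
    have hdiff : Tendsto (fun k => f (x k) - f (x (k + 1))) atTop (nhds 0) := by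
      have := hL.sub (hL.comp (tendsto_add_atTop_nat 1))
      simpa using this
    have hupper : ∀ k, c * ‖gradient f (x k)‖ ^ 2 ≤ f (x k) - f (x (k + 1)) := by
      intro k; linarith [hstep k]
    have h0 : Tendsto (fun k => c * ‖gradient f (x k)‖ ^ 2) atTop (nhds 0) := by
      apply squeeze_zero (fun k => by positivity) hupper hdiff
    have := h0.const_mul c⁻¹
    simpa [inv_mul_cancel_left₀ (ne_of_gt hcpos)] using this
  have hgradnorm : Tendsto (fun k => ‖gradient f (x k)‖) atTop (nhds 0) := by
    have : Tendsto (fun k => Real.sqrt (‖gradient f (x k)‖ ^ 2)) atTop (nhds (Real.sqrt 0)) :=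
      (Real.continuous_sqrt.continuousAt).tendsto.comp hgrad2
    simpa [Real.sqrt_sq (norm_nonneg _)] using this
  have hgrad : Tendsto (fun k => gradient f (x k)) atTop (nhds 0) :=
    tendsto_zero_iff_norm_tendsto_zero.mpr hgradnorm
  -- gradient is continuous
  have hgradcont : Continuous (gradient f) := by
    have h1 : Continuous (fderiv ℝ f) := hf.continuous_fderiv one_ne_zero
    exact ((toDual ℝ (EuclideanSpace ℝ (Fin n))).symm.continuous).comp h1
  -- iterates stay in a compact sublevel set
  set K := {y | f y ≤ f (x 0)} with hK
  have hxK : ∀ k, x k ∈ K := fun k => hantimono (Nat.zero_le k)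
  have hKcomp : IsCompact K := hcompact (f (x 0))
  -- conclude via subsequences
  apply tendsto_of_subseq_tendsto
  intro ns hns
  obtain ⟨z, hzK, φ, hφ, hconv⟩ := hKcomp.tendsto_subseq (fun k => hxK (ns k))
  refine ⟨φ, ?_⟩
  have hz : gradient f z = 0 := by
    have h1 : Tendsto (fun m => gradient f (x (ns (φ m)))) atTop (nhds (gradient f z)) :=
      (hgradcont.continuousAt.tendsto).comp hconv
    have h2 : Tendsto (fun m => gradient f (x (ns (φ m)))) atTop (nhds 0) :=
      hgrad.comp (hns.comp hφ.tendsto_atTop)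
    exact tendsto_nhds_unique h1 h2
  have := huniq z hz
  subst this
  exact hconv
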